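/- Let X be a topological space and x₀ ∈ X. If X is a small loop transfer space at x₀, then π₁^s(X, x₀) = π₁^{sg}(X, x₀). -/

import Mathlib

open TopologicalSpace

attribute [local instance] Path.Homotopic.setoid

/-- The homotopy class of a loop, as an element of the fundamental group. -/
noncomputable def loopClass {X : Type*} [TopologicalSpace X] {x : X} (γ : Path x x) :
    FundamentalGroup X x :=
  FundamentalGroup.fromPath (X := TopCat.of X) ⟦γ⟧

/-- `α` is a small loop transfer (SLT) path: for every open neighborhood `U` of `α 0`
there is an open neighborhood `V` of `α 1` such that every loop at `α 1` inside `V` is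
path-homotopic to some loop at `α 0` inside `U` conjugated along `α`. -/
def IsSLTPath {X : Type*} [TopologicalSpace X] {x₀ x₁ : X} (α : Path x₀ x₁) : Prop :=
  ∀ U : Set X, IsOpen U → x₀ ∈ U →
    ∃ V : Set X, IsOpen V ∧ x₁ ∈ V ∧
      ∀ γ : Path x₁ x₁, (∀ t, γ t ∈ V) →
        ∃ γ' : Path x₀ x₀, (∀ t, γ' t ∈ U) ∧
          γ'.Homotopic ((α.trans γ).trans α.symm)

/-- `X` is a small loop transfer space at `x₀`: every path starting at `x₀` is an SLT path. -/
def IsSLTAt (X : Type*) [TopologicalSpace X] (x₀ : X) : Prop :=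
  ∀ (x₁ : X) (α : Path x₀ x₁), IsSLTPath α

/-- `X` is SLTL at `x₀`: every loop based at `x₀` is an SLT path. -/
def IsSLTLAt (X : Type*) [TopologicalSpace X] (x₀ : X) : Prop :=
  ∀ γ : Path x₀ x₀, IsSLTPath γ

/-- `X` is SLTP at `x₀`: every non-loop path starting at `x₀` is an SLT path. -/
def IsSLTPAt (X : Type*) [TopologicalSpace X] (x₀ : X) : Prop :=
  ∀ (x₁ : X) (α : Path x₀ x₁), x₁ ≠ x₀ → IsSLTPath α

/-- The set of homotopy classes of loops based at `x₀` with image contained in `U`;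
this is the image `i₊π₁(U, x₀)` of the homomorphism induced by the inclusion `U → X`. -/
noncomputable def loopClassesIn {X : Type*} [TopologicalSpace X] (x₀ : X) (U : Set X) :
    Set (FundamentalGroup X x₀) :=
  { g | ∃ γ : Path x₀ x₀, (∀ t, γ t ∈ U) ∧ g = loopClass γ }

/-- The quotient topology on the fundamental group, coinduced by the map from the loop
space (with the compact-open topology) sending a loop to its homotopy class. -/
noncomputable def qtop (X : Type*) [TopologicalSpace X] (x₀ : X) :
    TopologicalSpace (FundamentalGroup X x₀) :=
  coinduced (fun γ : Path x₀ x₀ => loopClass γ) inferInstance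

/-- The whisker topology on the fundamental group, generated by the basis of cosets
`[α] · i₊π₁(U, x₀)` for `U` an open neighborhood of `x₀`. -/
noncomputable def whTop (X : Type*) [TopologicalSpace X] (x₀ : X) :
    TopologicalSpace (FundamentalGroup X x₀) :=
  generateFrom { S | ∃ (g : FundamentalGroup X x₀) (U : Set X), IsOpen U ∧ x₀ ∈ U ∧
      S = (fun h => g * h) '' loopClassesIn x₀ U }

/-- A loop based at `x` is small if every open neighborhood of `x` contains a
representative of its homotopy class. -/
def IsSmallLoop {X : Type*} [TopologicalSpace X] {x : X} (γ : Path x x) : Prop :=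
  ∀ U : Set X, IsOpen U → x ∈ U →
    ∃ δ : Path x x, (∀ t, δ t ∈ U) ∧ δ.Homotopic γ

/-- `π₁ˢ(X, x)`: the set of homotopy classes of small loops based at `x`. -/
noncomputable def pi1s {X : Type*} [TopologicalSpace X] (x : X) :
    Set (FundamentalGroup X x) :=
  { g | ∃ γ : Path x x, IsSmallLoop γ ∧ g = loopClass γ }

/-- `π₁ˢᵍ(X, x₀)`: the subgroup generated by classes `[α * β * α⁻¹]` where `α` is a path
starting at `x₀` and `β` is a small loop based at `α 1`. -/
noncomputable def pi1sg {X : Type*} [TopologicalSpace X] (x₀ : X) :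
    Subgroup (FundamentalGroup X x₀) :=
  Subgroup.closure { g | ∃ (x₁ : X) (α : Path x₀ x₁) (β : Path x₁ x₁), IsSmallLoop β ∧
      g = loopClass ((α.trans β).trans α.symm) }

/-- The path Spanier group of a path open cover `V` at `x₀`: the subgroup generated by the
classes `[α * β * α⁻¹]` where `α` is a path starting at `x₀` and `β` is a loop based at
`α 1` with image inside `V α`. -/
noncomputable def pathSpanierGroup {X : Type*} [TopologicalSpace X] (x₀ : X)
    (V : ∀ x₁ : X, Path x₀ x₁ → Set X) : Subgroup (FundamentalGroup X x₀) :=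
  Subgroup.closure { g | ∃ (x₁ : X) (α : Path x₀ x₁) (β : Path x₁ x₁),
      (∀ t, β t ∈ V x₁ α) ∧ g = loopClass ((α.trans β).trans α.symm) }

/-- `X` is small "small loop" transfer (SSLT) at `x₀`. -/
def IsSSLTAt (X : Type*) [TopologicalSpace X] (x₀ : X) : Prop :=
  ∀ (x₁ : X) (α : Path x₀ x₁) (U : Set X), IsOpen U → x₀ ∈ U →
    ∃ V : Set X, IsOpen V ∧ x₁ ∈ V ∧
      ∀ β : Path x₁ x₁, IsSmallLoop β → (∀ t, β t ∈ V) →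
        ∃ γ : Path x₀ x₀, (∀ t, γ t ∈ U) ∧
          γ.Homotopic ((α.trans β).trans α.symm)

/-- `X` is semilocally small generated: every point has an open neighborhood `U` with
`i₊π₁(U, x) ≤ π₁ˢᵍ(X, x)`. -/
noncomputable def SemilocallySmallGenerated (X : Type*) [TopologicalSpace X] : Prop :=
  ∀ x : X, ∃ U : Set X, IsOpen U ∧ x ∈ U ∧ loopClassesIn x U ⊆ (pi1sg x : Set (FundamentalGroup X x))

/-!
Small loops at a point form a subgroup `π₁ˢ` of `π₁`, which lies in `π₁ˢᵍ` by conjugating along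
the constant path. Conversely, conjugating a small loop `β` at `α 1` along an SLT path `α`
gives a small loop at `α 0`: for a neighbourhood `U` of `α 0`, the SLT property yields `V`
around `α 1`, `β` has a representative inside `V`, and that representative transfers into `U`.
So every generator of `π₁ˢᵍ` lies in the subgroup `π₁ˢ`.
-/

section SmallLoops

variable {X : Type*} [TopologicalSpace X]

theorem loopClass_trans {x : X} (γ δ : Path x x) :
    loopClass (γ.trans δ) = loopClass δ * loopClass γ :=
  Path.Homotopic.Quotient.mk_trans γ δ

theorem loopClass_symm {x : X} (γ : Path x x) : loopClass γ.symm = (loopClass γ)⁻¹ :=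
  rfl

theorem loopClass_refl (x : X) : loopClass (Path.refl x) = 1 :=
  rfl

theorem loopClass_conj_refl {x : X} (γ : Path x x) :
    loopClass (((Path.refl x).trans γ).trans (Path.refl x).symm) = loopClass γ := by
  simp only [loopClass_trans, loopClass_symm, loopClass_refl, inv_one, one_mul, mul_one]

theorem Path.trans_apply_mem {x y z : X} {γ : Path x y} {δ : Path y z} {U : Set X}
    (hγ : ∀ t, γ t ∈ U) (hδ : ∀ t, δ t ∈ U) (t : unitInterval) : (γ.trans δ) t ∈ U := by
  rw [Path.trans_apply]
  split
  exacts [hγ _, hδ _]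

theorem isSmallLoop_refl (x : X) : IsSmallLoop (Path.refl x) := fun _ _ hxU =>
  ⟨Path.refl x, fun _ => hxU, Path.Homotopic.refl _⟩

theorem IsSmallLoop.symm {x : X} {γ : Path x x} (hγ : IsSmallLoop γ) :
    IsSmallLoop γ.symm := by
  intro U hU hxU
  obtain ⟨δ, hδU, hδγ⟩ := hγ U hU hxU
  exact ⟨δ.symm, fun _ => hδU _, hδγ.symm₂⟩

theorem IsSmallLoop.trans {x : X} {γ δ : Path x x} (hγ : IsSmallLoop γ)
    (hδ : IsSmallLoop δ) : IsSmallLoop (γ.trans δ) := by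
  intro U hU hxU
  obtain ⟨γ', hγ'U, hγ'⟩ := hγ U hU hxU
  obtain ⟨δ', hδ'U, hδ'⟩ := hδ U hU hxU
  exact ⟨γ'.trans δ', Path.trans_apply_mem hγ'U hδ'U, hγ'.hcomp hδ'⟩

noncomputable def pi1sSubgroup (x : X) : Subgroup (FundamentalGroup X x) where
  carrier := pi1s x
  one_mem' := ⟨Path.refl x, isSmallLoop_refl x, (loopClass_refl x).symm⟩
  mul_mem' := by
    rintro _ _ ⟨γ, hγ, rfl⟩ ⟨δ, hδ, rfl⟩
    exact ⟨δ.trans γ, hδ.trans hγ, (loopClass_trans δ γ).symm⟩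
  inv_mem' := by
    rintro _ ⟨γ, hγ, rfl⟩
    exact ⟨γ.symm, hγ.symm, (loopClass_symm γ).symm⟩

theorem IsSLTPath.isSmallLoop_conj {x₀ x₁ : X} {α : Path x₀ x₁} (hα : IsSLTPath α)
    {β : Path x₁ x₁} (hβ : IsSmallLoop β) : IsSmallLoop ((α.trans β).trans α.symm) := by
  intro U hU hx₀U
  obtain ⟨V, hV, hx₁V, hVU⟩ := hα U hU hx₀U
  obtain ⟨δ, hδV, hδβ⟩ := hβ V hV hx₁V
  obtain ⟨γ, hγU, hγδ⟩ := hVU δ hδV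
  exact ⟨γ, hγU, hγδ.trans (((Path.Homotopic.refl α).hcomp hδβ).hcomp (.refl α.symm))⟩

end SmallLoops

/-- If `X` is SLT at `x₀`, then `π₁ˢ(X, x₀) = π₁ˢᵍ(X, x₀)`. -/
theorem pi1s_eq_pi1sg_of_slt {X : Type*} [TopologicalSpace X] (x₀ : X)
    (h : IsSLTAt X x₀) :
    pi1s x₀ = (pi1sg x₀ : Set (FundamentalGroup X x₀)) := by
  apply Set.Subset.antisymm
  · rintro _ ⟨γ, hγ, rfl⟩
    exact Subgroup.subset_closure ⟨x₀, Path.refl x₀, γ, hγ, (loopClass_conj_refl γ).symm⟩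
  · refine (Subgroup.closure_le (pi1sSubgroup x₀)).mpr ?_
    rintro _ ⟨x₁, α, β, hβ, rfl⟩
    exact ⟨_, (h x₁ α).isSmallLoop_conj hβ, rfl⟩
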